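/- Let V(z, z̄, z⁺) be the Lyapunov function with parameter γ and let T₁, T₂ be the extragradient operators. If γ ∈ (0, 1/L), z ∈ H, z̄ = T₁(z), z⁺ = T₂(z), then V(z, z̄, z⁺) = 0 if and only if z = z̄ = z⁺ and z ∈ zer(F + ∂g). -/

import Mathlib

open scoped RealInnerProductSpace

/-- `g` is proper: finite somewhere and never `⊥`. -/
def IsProperEF {H : Type*} (g : H → EReal) : Prop :=
  (∃ x, g x ≠ ⊤) ∧ ∀ x, g x ≠ ⊥

/-- `g` is convex (extended-real-valued). -/
def IsConvexEF {H : Type*} [NormedAddCommGroup H] [InnerProductSpace ℝ H]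
    (g : H → EReal) : Prop :=
  ∀ x y : H, ∀ a b : ℝ, 0 ≤ a → 0 ≤ b → a + b = 1 →
    g (a • x + b • y) ≤ (a : EReal) * g x + (b : EReal) * g y

/-- `ξ` is a subgradient of `g` at `z`, i.e. `ξ ∈ ∂g(z)`. -/
def InSubdiff {H : Type*} [NormedAddCommGroup H] [InnerProductSpace ℝ H]
    (g : H → EReal) (z ξ : H) : Prop :=
  ∀ y : H, g z + ((⟪ξ, y - z⟫ : ℝ) : EReal) ≤ g y

/-- `p = prox_{γ g}(x)`, i.e. `p` minimizes `g(·) + (1/(2γ))‖x - ·‖²`. -/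
def IsProx {H : Type*} [NormedAddCommGroup H] [InnerProductSpace ℝ H]
    (g : H → EReal) (γ : ℝ) (x p : H) : Prop :=
  ∀ y : H, g p + ((1 / (2 * γ) * ‖x - p‖ ^ 2 : ℝ) : EReal) ≤
    g y + ((1 / (2 * γ) * ‖x - y‖ ^ 2 : ℝ) : EReal)

/-- The Lyapunov function `V`. -/
noncomputable def lyapV {H : Type*} [NormedAddCommGroup H] [InnerProductSpace ℝ H]
    (F : H → H) (γ : ℝ) (z zb zp : H) : ℝ :=
  (2 / γ) * ⟪z - zp, F z - F zb⟫ + (1 / γ ^ 2) * ‖zp - zb‖ ^ 2 + (1 / γ ^ 2) * ‖z - zp‖ ^ 2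

/-!
With `u = z - zb`, `v = zb - zp` and `d = γ • (F z - F zb)` one has
`2 γ² V = ‖u + 2 v + d‖² + (‖u‖² - ‖d‖²) + 2 ⟪u, d⟫`. Monotonicity makes the last term nonnegative
and Lipschitz continuity gives `‖d‖ ≤ γ L ‖u‖` with `γ L < 1`, so `V = 0` forces `u = 0`, hence
`d = 0` and `v = 0`. At `z = zb` the optimality condition of the prox, `γ⁻¹ • (x - p) ∈ ∂g(p)`,
reads `-F z ∈ ∂g(z)`.
-/

open Set Filter Topology

theorem le_of_forall_mem_Ioo_le_add_mul {a b C : ℝ} (h : ∀ t ∈ Ioo (0 : ℝ) 1, a ≤ b + t * C) :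
    a ≤ b := by
  have hlim : Tendsto (fun t : ℝ => b + t * C) (𝓝[>] 0) (𝓝 b) := by
    have hcont : Continuous fun t : ℝ => b + t * C := by fun_prop
    simpa using (hcont.tendsto 0).mono_left nhdsWithin_le_nhds
  exact ge_of_tendsto hlim (eventually_of_mem (Ioo_mem_nhdsGT one_pos) h)

section

variable {H : Type*} [NormedAddCommGroup H] [InnerProductSpace ℝ H]

theorem IsProx.ne_top {g : H → EReal} (hproper : IsProperEF g) {γ : ℝ} {x p : H}
    (hprox : IsProx g γ x p) : g p ≠ ⊤ := by
  obtain ⟨⟨y, hy⟩, -⟩ := hproper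
  intro hp
  have h := hprox y
  rw [hp, EReal.top_add_coe, top_le_iff] at h
  exact (EReal.add_lt_top hy (EReal.coe_ne_top _)).ne h

theorem IsProx.inSubdiff {g : H → EReal} (hproper : IsProperEF g) (hconv : IsConvexEF g)
    {γ : ℝ} (hγ : 0 < γ) {x p : H} (hprox : IsProx g γ x p) :
    InSubdiff g p (γ⁻¹ • (x - p)) := by
  intro y
  lift g p to ℝ using ⟨hprox.ne_top hproper, hproper.2 p⟩ with r hr
  by_cases hy : g y = ⊤
  · rw [hy]; exact le_top
  lift g y to ℝ using ⟨hy, hproper.2 y⟩ with s hs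
  rw [← EReal.coe_add, EReal.coe_le_coe_iff]
  -- compare `p` with the points of the segment from `p` to `y`, then let them tend to `p`
  refine le_of_forall_mem_Ioo_le_add_mul (C := 1 / (2 * γ) * ‖y - p‖ ^ 2) fun t ht => ?_
  have hseg : g ((1 - t) • p + t • y) ≤ (((1 - t) * r + t * s : ℝ) : EReal) := by
    have h := hconv p y (1 - t) t (by linarith [ht.2]) ht.1.le (by ring)
    rwa [← hr, ← hs, ← EReal.coe_mul, ← EReal.coe_mul, ← EReal.coe_add] at h
  have hmin := (hprox _).trans (add_le_add_left hseg _)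
  rw [← hr, ← EReal.coe_add, ← EReal.coe_add, EReal.coe_le_coe_iff] at hmin
  have hxt : x - ((1 - t) • p + t • y) = (x - p) - t • (y - p) := by module
  rw [hxt, norm_sub_sq_real (x := x - p), norm_smul, real_inner_smul_right,
    Real.norm_of_nonneg ht.1.le] at hmin
  rw [real_inner_smul_left]
  have hscaled : t * (r + γ⁻¹ * ⟪x - p, y - p⟫) ≤ t * (s + t * (1 / (2 * γ) * ‖y - p‖ ^ 2)) := by
    field_simp at hmin ⊢
    nlinarith
  exact le_of_mul_le_mul_left hscaled ht.1

theorem two_mul_sq_mul_lyapV (F : H → H) {γ : ℝ} (hγ : γ ≠ 0) (z zb zp : H) :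
    2 * γ ^ 2 * lyapV F γ z zb zp =
      ‖z - zb + (2 : ℝ) • (zb - zp) + γ • (F z - F zb)‖ ^ 2
        + (‖z - zb‖ ^ 2 - ‖γ • (F z - F zb)‖ ^ 2) + 2 * ⟪z - zb, γ • (F z - F zb)⟫ := by
  simp only [lyapV, ← real_inner_self_eq_norm_sq, inner_add_left, inner_add_right,
    inner_sub_left, inner_sub_right, real_inner_smul_right, real_inner_comm]
  field_simp
  ring

theorem eq_and_eq_of_lyapV_eq_zero {F : H → H} {L γ : ℝ}
    (hmono : ∀ x y : H, 0 ≤ ⟪F x - F y, x - y⟫)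
    (hlip : ∀ x y : H, ‖F x - F y‖ ≤ L * ‖x - y‖)
    (hγ : 0 < γ) (hγL : γ * L < 1) {z zb zp : H} (hV : lyapV F γ z zb zp = 0) :
    z = zb ∧ zb = zp := by
  have hid := two_mul_sq_mul_lyapV F hγ.ne' z zb zp
  set d := γ • (F z - F zb)
  have hud : 0 ≤ ⟪z - zb, d⟫ := by
    rw [real_inner_smul_right, real_inner_comm]
    exact mul_nonneg hγ.le (hmono z zb)
  have hd : ‖d‖ ≤ γ * L * ‖z - zb‖ := by
    rw [norm_smul, Real.norm_of_nonneg hγ.le, mul_assoc]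
    exact mul_le_mul_of_nonneg_left (hlip z zb) hγ.le
  have hu : ‖z - zb‖ ≤ ‖d‖ := by
    rw [hV, mul_zero] at hid
    nlinarith [norm_nonneg (z - zb), norm_nonneg d,
      sq_nonneg ‖z - zb + (2 : ℝ) • (zb - zp) + d‖]
  have hz : z = zb := by
    rw [← sub_eq_zero, ← norm_eq_zero]
    nlinarith [norm_nonneg (z - zb)]
  subst hz
  refine ⟨rfl, ?_⟩
  simp only [d, hV, sub_self, smul_zero, add_zero, zero_add, norm_zero, mul_zero,
    inner_zero_right] at hid
  have : (2 : ℝ) • (z - zp) = 0 := by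
    rw [← norm_eq_zero]
    nlinarith [norm_nonneg ((2 : ℝ) • (z - zp))]
  rwa [smul_eq_zero, sub_eq_zero, or_iff_right two_ne_zero] at this

end

theorem stmt14_general {H : Type*} [NormedAddCommGroup H] [InnerProductSpace ℝ H]
    (F : H → H) (L γ : ℝ)
    (hmono : ∀ x y : H, 0 ≤ ⟪F x - F y, x - y⟫)
    (hlip : ∀ x y : H, ‖F x - F y‖ ≤ L * ‖x - y‖)
    (g : H → EReal) (hproper : IsProperEF g) (hconv : IsConvexEF g)
    (hγ0 : 0 < γ) (hγ1 : γ < 1 / L)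
    (z zb zp : H)
    (hzb : IsProx g γ (z - γ • F z) zb) :
    lyapV F γ z zb zp = 0 ↔ (z = zb ∧ zb = zp ∧ InSubdiff g z (-F z)) := by
  constructor
  · intro hV
    have hL : 0 < L := one_div_pos.mp (hγ0.trans hγ1)
    obtain ⟨rfl, rfl⟩ := eq_and_eq_of_lyapV_eq_zero hmono hlip hγ0 ((lt_div_iff₀ hL).mp hγ1) hV
    refine ⟨rfl, rfl, ?_⟩
    have hres : γ⁻¹ • (z - γ • F z - z) = -F z := by
      rw [sub_sub_cancel_left, smul_neg, inv_smul_smul₀ hγ0.ne']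
    simpa only [hres] using hzb.inSubdiff hproper hconv hγ0
  · rintro ⟨rfl, rfl, -⟩
    simp [lyapV]

theorem stmt14 {H : Type*} [NormedAddCommGroup H] [InnerProductSpace ℝ H] [CompleteSpace H]
    (F : H → H) (L γ : ℝ) (hL : 0 < L)
    (hmono : ∀ x y : H, 0 ≤ ⟪F x - F y, x - y⟫)
    (hlip : ∀ x y : H, ‖F x - F y‖ ≤ L * ‖x - y‖)
    (g : H → EReal) (hproper : IsProperEF g) (hconv : IsConvexEF g)
    (hlsc : LowerSemicontinuous g)
    (hγ0 : 0 < γ) (hγ1 : γ < 1 / L)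
    (z zb zp : H)
    (hzb : IsProx g γ (z - γ • F z) zb)
    (hzp : IsProx g γ (z - γ • F zb) zp) :
    lyapV F γ z zb zp = 0 ↔ (z = zb ∧ zb = zp ∧ InSubdiff g z (-F z)) :=
  stmt14_general F L γ hmono hlip g hproper hconv hγ0 hγ1 z zb zp hzb
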